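/- Let n ≥ 2 be an even integer and let E = 1 + nℤ = {1 + nk : k ∈ ℤ} ⊆ ℤ, where ℤ is identified with the dual group of the circle group 𝕋 via k ↦ (z ↦ z^k). Then the angular constant satisfies α_n(E) ≤ π − π/n; indeed, the point g = e^{iπ/n} ∈ 𝕋 satisfies |θ − arg γ(g)| ≤ π − π/n (mod 2π) for every θ ∈ 𝐙ₙ and every γ ∈ E. -/
import Mathlib

open Complex
open scoped Real

/-- Distance between two real numbers measured modulo `2π`, i.e. as distance
on the circle `ℝ/2πℤ`; it takes values in `[0, π]`. -/
noncomputable def angDist (a b : ℝ) : ℝ := |((a - b : ℝ) : Real.Angle).toReal|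

/-- The set `𝐙ₙ = {2πj/n : j = 0, 1, ..., n-1}` of angles of `n`-th roots of unity. -/
noncomputable def Zn (n : ℕ) : Set ℝ := {θ : ℝ | ∃ j : ℕ, j < n ∧ θ = 2 * π * j / n}

/-- `αₙ(E)` for a set `E ⊆ ℤ`, where `ℤ` is identified with the dual group of the
circle group `𝕋` via `k ↦ (z ↦ z^k)`: the infimum of `ε ≥ 0` such that every
`𝐙ₙ`-valued function on `E` can be approximated within `ε` (mod `2π`) by the argument
of a character evaluation. -/
noncomputable def angularConstantNZ (n : ℕ) (E : Set ℤ) : ℝ :=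
  sInf {ε : ℝ | 0 ≤ ε ∧ ∀ φ : ℤ → ℝ, (∀ k ∈ E, φ k ∈ Zn n) →
    ∃ x : Circle, ∀ k ∈ E, angDist (φ k) (Complex.arg ((x ^ k : Circle) : ℂ)) ≤ ε}

lemma key (n : ℕ) (hn : 2 ≤ n) (heven : Even n) (s : ℤ) (hs : Odd s) :
    |(((s : ℝ) * (π / n) : ℝ) : Real.Angle).toReal| ≤ π - π / n := by
  have hn0 : (0:ℝ) < n := by positivity
  set A := (((s : ℝ) * (π / n) : ℝ) : Real.Angle) with hAdef
  obtain ⟨k, hk⟩ := Real.Angle.angle_eq_iff_two_pi_dvd_sub.1 (Real.Angle.coe_toReal A)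
  have hpi : (n:ℝ) * (π/n) = π := by field_simp
  set t : ℤ := s + 2 * n * k with ht
  have hA : A.toReal = (t:ℝ) * (π / n) := by
    have htR : (t:ℝ) = (s:ℝ) + 2*(n:ℝ)*(k:ℝ) := by rw [ht]; push_cast; ring
    rw [htR]; linear_combination hk - 2*(k:ℝ) * hpi
  obtain ⟨e, he⟩ : Odd t := by
    rcases hs with ⟨c, hc⟩
    exact ⟨c + n * k, by rw [ht, hc]; push_cast; ring⟩
  have h1 : -π < A.toReal := Real.Angle.neg_pi_lt_toReal A
  have h2 : A.toReal ≤ π := Real.Angle.toReal_le_pi A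
  rw [hA] at h1 h2
  have hpin : (0:ℝ) < π / n := by positivity
  have hlt : -(n:ℝ) < (t:ℝ) :=
    lt_of_mul_lt_mul_right (by nlinarith) hpin.le
  have hle : (t:ℝ) ≤ n :=
    le_of_mul_le_mul_right (by nlinarith) hpin
  have hlt' : -(n:ℤ) < t := by exact_mod_cast hlt
  have hle' : t ≤ (n:ℤ) := by exact_mod_cast hle
  obtain ⟨d, hd⟩ := heven
  have habs : |t| ≤ (n:ℤ) - 1 := by
    rw [abs_le]
    omega
  have habsR : |(t:ℝ)| ≤ (n:ℝ) - 1 := by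
    have := habs
    rw [abs_le] at this ⊢
    constructor <;> [exact_mod_cast this.1; exact_mod_cast this.2]
  calc |A.toReal| = |(t:ℝ)| * (π/n) := by rw [hA, abs_mul, abs_of_pos hpin]
    _ ≤ ((n:ℝ) - 1) * (π/n) := by nlinarith
    _ = π - π / n := by field_simp

lemma part2 (n : ℕ) (hn : 2 ≤ n) (heven : Even n) :
    ∀ θ ∈ Zn n, ∀ m ∈ {m : ℤ | ∃ k : ℤ, m = 1 + (n : ℤ) * k},
      angDist θ (Complex.arg (((Circle.exp (π / n)) ^ m : Circle) : ℂ)) ≤ π - π / n := by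
  rintro θ ⟨j, hj, rfl⟩ m ⟨k, rfl⟩
  have hn0 : (0:ℝ) < n := by positivity
  set m : ℤ := 1 + (n:ℤ) * k with hm
  set s : ℤ := 2 * (j:ℤ) - 1 - (n:ℤ) * k with hsdef
  have hpow : ((Circle.exp (π/n)) ^ m : Circle) = Circle.exp ((m:ℝ) * (π/n)) := by
    have := map_zsmul Circle.expHom m (π/n)
    simpa [zsmul_eq_mul] using this.symm
  have hargA : (Complex.arg (((Circle.exp (π/n)) ^ m : Circle) : ℂ) : Real.Angle)
      = (((m:ℝ) * (π/n) : ℝ) : Real.Angle) := by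
    rw [hpow]
    have h := Real.Angle.arg_toCircle (((m:ℝ) * (π/n) : ℝ) : Real.Angle)
    rwa [Real.Angle.toCircle_coe] at h
  have hangle : ((2 * π * j / n - Complex.arg (((Circle.exp (π/n)) ^ m : Circle) : ℂ) : ℝ) : Real.Angle)
      = (((s:ℝ) * (π/n) : ℝ) : Real.Angle) := by
    rw [Real.Angle.coe_sub, hargA, ← Real.Angle.coe_sub]
    congr 1
    rw [hm, hsdef]
    push_cast
    field_simp
    ring
  have hsodd : Odd s := by
    obtain ⟨d, hd⟩ := heven
    have hd' : (n:ℤ) = d + d := by exact_mod_cast hd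
    exact ⟨(j:ℤ) - d*k - 1, by rw [hsdef, hd']; ring⟩
  unfold angDist
  rw [hangle]
  exact key n hn heven s hsodd

theorem stmt7 (n : ℕ) (hn : 2 ≤ n) (heven : Even n) :
    angularConstantNZ n {m : ℤ | ∃ k : ℤ, m = 1 + (n : ℤ) * k} ≤ π - π / n ∧
    ∀ θ ∈ Zn n, ∀ m ∈ {m : ℤ | ∃ k : ℤ, m = 1 + (n : ℤ) * k},
      angDist θ (Complex.arg (((Circle.exp (π / n)) ^ m : Circle) : ℂ)) ≤ π - π / n := by
  refine ⟨?_, part2 n hn heven⟩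
  have hnonneg : 0 ≤ π - π / n := by
    have : π / n ≤ π / 1 := by
      apply div_le_div_of_nonneg_left Real.pi_pos.le one_pos
      exact_mod_cast Nat.one_le_of_lt hn
    simp at this
    linarith
  apply csInf_le
  · exact ⟨0, fun ε hε => hε.1⟩
  · refine ⟨hnonneg, fun φ hφ => ⟨Circle.exp (π/n), fun k hk => ?_⟩⟩
    exact part2 n hn heven (φ k) (hφ k hk) k hk
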